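/- There exists a constant C > 0 such that for all λ ∈ (0,1) and all (x,p) ∈ [0,1) × ℝ, |p| + 𝒜_λ⁻(x,p) ≤ C·(1 + |p| + λ²·p²). -/

import Mathlib

open MeasureTheory Real

/-- The jump rate kernel `𝒥_λ(p,p')`. -/
noncomputable def Jker (lam p p' : ℝ) : ℝ :=
  ((1 + lam) / 64) * |p' - p| *
    Real.exp (-(1/2) * ((1 - lam)/2 * p - (1 + lam)/2 * p')^2)

/-- The Hamiltonian `H(x,p) = p²/2 + V(x)`. -/
noncomputable def Ham (V : ℝ → ℝ) (x p : ℝ) : ℝ := p^2 / 2 + V x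

/-- `𝒜_λ(x,p)`. -/
noncomputable def Acal (V : ℝ → ℝ) (lam x p : ℝ) : ℝ :=
  ∫ p' : ℝ, (Real.sqrt (2 * Ham V x p') - Real.sqrt (2 * Ham V x p)) * Jker lam p p'

/-- Negative part `𝒜_λ⁻`. -/
noncomputable def Aminus (V : ℝ → ℝ) (lam x p : ℝ) : ℝ := max (-(Acal V lam x p)) 0

/-!
Since `q ↦ √(q² + s)` is 1-Lipschitz, `|𝒜_λ(x,p)| ≤ ∫ |p' - p| 𝒥_λ(p,p') dp'`. With
`w = (1+λ)/2 · p' - (1-λ)/2 · p` the Gaussian factor of the kernel is `exp(-w²/2)` and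
`(1+λ)/2 · (p' - p) = w - λp`, so `|p' - p|²` costs at most `w² + λ²p²`; the Gaussian absorbs `w²`,
and what remains is `(4 + λ²p²)/8` times a Gaussian integral in `p'` of size at most `8`.
Hence `|𝒜_λ| ≤ 4 + λ²p²` and `C = 4` works.
-/

theorem sqrt_sq_add_le_sqrt_sq_add_add_abs_sub {s : ℝ} (hs : 0 ≤ s) (q q' : ℝ) :
    √(q' ^ 2 + s) ≤ √(q ^ 2 + s) + |q' - q| := by
  have hq : |q| ≤ √(q ^ 2 + s) := Real.abs_le_sqrt (by linarith)
  have hq' : |q'| ≤ |q| + |q' - q| := by linarith [abs_sub_abs_le_abs_sub q' q]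
  rw [Real.sqrt_le_left (by positivity), add_sq, Real.sq_sqrt (by positivity), ← sq_abs q']
  nlinarith [abs_nonneg q', abs_nonneg (q' - q), sq_abs q]

theorem abs_sqrt_sq_add_sub_sqrt_sq_add_le {s : ℝ} (hs : 0 ≤ s) (q q' : ℝ) :
    |√(q' ^ 2 + s) - √(q ^ 2 + s)| ≤ |q' - q| := by
  have h := sqrt_sq_add_le_sqrt_sq_add_add_abs_sub hs q' q
  rw [abs_sub_comm] at h
  rw [abs_sub_le_iff]
  constructor <;> linarith [sqrt_sq_add_le_sqrt_sq_add_add_abs_sub hs q q']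

theorem sq_mul_exp_neg_half_sq_le (t : ℝ) :
    t ^ 2 * exp (-(t ^ 2 / 2)) ≤ 4 * exp (-(t ^ 2 / 4)) := by
  have hsplit : exp (-(t ^ 2 / 2)) = exp (-(t ^ 2 / 4)) * exp (-(t ^ 2 / 4)) := by
    rw [← exp_add]; ring_nf
  have hpoly : t ^ 2 * exp (-(t ^ 2 / 4)) ≤ 4 := by
    rw [exp_neg, mul_inv_le_iff₀' (exp_pos _)]
    linarith [add_one_le_exp (t ^ 2 / 4)]
  rw [hsplit, ← mul_assoc]
  exact mul_le_mul_of_nonneg_right hpoly (exp_pos _).le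

theorem Jker_nonneg {lam : ℝ} (hlam : 0 ≤ 1 + lam) (p p' : ℝ) : 0 ≤ Jker lam p p' := by
  unfold Jker; positivity

theorem abs_sub_mul_Jker_le {lam : ℝ} (hlam : 0 ≤ lam) (p p' : ℝ) :
    |p' - p| * Jker lam p p' ≤
      (4 + lam ^ 2 * p ^ 2) / 8 * exp (-(((1 + lam) / 2 * p' - (1 - lam) / 2 * p) ^ 2 / 4)) := by
  set b := (1 + lam) / 2 with hb_def
  set w := b * p' - (1 - lam) / 2 * p
  have hb : 1 / 2 ≤ b := by linarith
  have hJ : |p' - p| * Jker lam p p' = b / 32 * (p' - p) ^ 2 * exp (-(w ^ 2 / 2)) := by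
    have habs : |p' - p| * |p' - p| = (p' - p) ^ 2 := by rw [← sq, sq_abs]
    unfold Jker
    rw [show -(1 / 2) * ((1 - lam) / 2 * p - (1 + lam) / 2 * p') ^ 2 = -(w ^ 2 / 2) by ring]
    linear_combination (1 + lam) / 64 * exp (-(w ^ 2 / 2)) * habs
  have hbw : b * (p' - p) = w - lam * p := by ring
  have hquad : b / 32 * (p' - p) ^ 2 ≤ (w ^ 2 + lam ^ 2 * p ^ 2) / 8 := by
    have h2b : 0 ≤ (2 * b - 1) * (b * (p' - p) ^ 2) := by
      apply mul_nonneg <;> nlinarith [sq_nonneg (p' - p)]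
    have hsq : (b * (p' - p)) ^ 2 ≤ 2 * (w ^ 2 + lam ^ 2 * p ^ 2) := by
      rw [hbw]; nlinarith [sq_nonneg (w + lam * p)]
    nlinarith
  have hexp : exp (-(w ^ 2 / 2)) ≤ exp (-(w ^ 2 / 4)) := by
    gcongr; nlinarith [sq_nonneg w]
  rw [hJ]
  calc b / 32 * (p' - p) ^ 2 * exp (-(w ^ 2 / 2))
      ≤ (w ^ 2 + lam ^ 2 * p ^ 2) / 8 * exp (-(w ^ 2 / 2)) := by gcongr
    _ = (w ^ 2 * exp (-(w ^ 2 / 2)) + lam ^ 2 * p ^ 2 * exp (-(w ^ 2 / 2))) / 8 := by ring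
    _ ≤ (4 * exp (-(w ^ 2 / 4)) + lam ^ 2 * p ^ 2 * exp (-(w ^ 2 / 4))) / 8 := by
        gcongr (?_ + ?_) / 8
        · exact sq_mul_exp_neg_half_sq_le w
        · exact mul_le_mul_of_nonneg_left hexp (by positivity)
    _ = (4 + lam ^ 2 * p ^ 2) / 8 * exp (-(w ^ 2 / 4)) := by ring

theorem exp_neg_sq_affine_eq {b : ℝ} (hb : b ≠ 0) (d : ℝ) :
    (fun y : ℝ => exp (-((b * y - d) ^ 2 / 4))) =
      fun y => exp (-(b ^ 2 / 4) * (y - d / b) ^ 2) := by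
  funext y
  congr 1
  field_simp

theorem integrable_exp_neg_sq_affine {b : ℝ} (hb : 0 < b) (d : ℝ) :
    Integrable fun y : ℝ => exp (-((b * y - d) ^ 2 / 4)) := by
  rw [exp_neg_sq_affine_eq hb.ne']
  exact (integrable_exp_neg_mul_sq (by positivity)).comp_sub_right (d / b)

theorem integral_exp_neg_sq_affine_le {b : ℝ} (hb : 1 / 2 ≤ b) (d : ℝ) :
    ∫ y : ℝ, exp (-((b * y - d) ^ 2 / 4)) ≤ 8 := by
  have hb0 : 0 < b := by linarith
  rw [exp_neg_sq_affine_eq hb0.ne',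
    integral_sub_right_eq_self (fun y => exp (-(b ^ 2 / 4) * y ^ 2)) (d / b), integral_gaussian,
    sqrt_le_left (by norm_num), div_le_iff₀ (by positivity)]
  nlinarith [pi_le_four]

theorem abs_Acal_le {V : ℝ → ℝ} {lam x : ℝ} (hlam : 0 ≤ lam) (hV : 0 ≤ V x) (p : ℝ) :
    |Acal V lam x p| ≤ 4 + lam ^ 2 * p ^ 2 := by
  set g := fun p' : ℝ => exp (-(((1 + lam) / 2 * p' - (1 - lam) / 2 * p) ^ 2 / 4))
  have hg : Integrable g := integrable_exp_neg_sq_affine (by linarith) _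
  have hpointwise : ∀ p', ‖(√(2 * Ham V x p') - √(2 * Ham V x p)) * Jker lam p p'‖ ≤
      (4 + lam ^ 2 * p ^ 2) / 8 * g p' := by
    intro p'
    have h2Ham : ∀ q, 2 * Ham V x q = q ^ 2 + 2 * V x := fun q => by unfold Ham; ring
    rw [norm_mul, norm_eq_abs, norm_of_nonneg (Jker_nonneg (by linarith) p p'), h2Ham, h2Ham]
    calc |√(p' ^ 2 + 2 * V x) - √(p ^ 2 + 2 * V x)| * Jker lam p p'
        ≤ |p' - p| * Jker lam p p' :=
          mul_le_mul_of_nonneg_right (abs_sqrt_sq_add_sub_sqrt_sq_add_le (by linarith) p p')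
            (Jker_nonneg (by linarith) p p')
      _ ≤ (4 + lam ^ 2 * p ^ 2) / 8 * g p' := abs_sub_mul_Jker_le hlam p p'
  rw [← norm_eq_abs]
  calc ‖Acal V lam x p‖ ≤ ∫ p', (4 + lam ^ 2 * p ^ 2) / 8 * g p' :=
        norm_integral_le_of_norm_le (hg.const_mul _) (.of_forall hpointwise)
    _ ≤ (4 + lam ^ 2 * p ^ 2) / 8 * 8 := by
        rw [integral_const_mul]
        gcongr
        exact integral_exp_neg_sq_affine_le (by linarith) _
    _ = 4 + lam ^ 2 * p ^ 2 := by ring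

theorem stmt11_general (V : ℝ → ℝ) (hVnn : ∀ x, 0 ≤ V x) :
    ∃ C > 0, ∀ lam ∈ Set.Ioo (0:ℝ) 1, ∀ x ∈ Set.Ico (0:ℝ) 1, ∀ p : ℝ,
      |p| + Aminus V lam x p ≤ C * (1 + |p| + lam^2 * p^2) := by
  refine ⟨4, by norm_num, fun lam hlam x _ p => ?_⟩
  have hA := abs_Acal_le hlam.1.le (hVnn x) p
  have hAminus : Aminus V lam x p ≤ |Acal V lam x p| :=
    max_le (neg_le_abs _) (abs_nonneg _)
  linarith [abs_nonneg p, mul_nonneg (sq_nonneg lam) (sq_nonneg p)]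

theorem stmt11 (V : ℝ → ℝ) (hV : ContDiff ℝ 1 V) (hper : ∀ x, V (x + 1) = V x)
    (hVnn : ∀ x, 0 ≤ V x) :
    ∃ C > 0, ∀ lam ∈ Set.Ioo (0:ℝ) 1, ∀ x ∈ Set.Ico (0:ℝ) 1, ∀ p : ℝ,
      |p| + Aminus V lam x p ≤ C * (1 + |p| + lam^2 * p^2) :=
  stmt11_general V hVnn
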